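/- arXiv:1711.00879 — 2 statements merged into one kernel-verified Lean document; each statement's English description precedes it below -/
import Mathlib

section
/- Let γ be a multi-index with |γ| = 2m and suppose u₀ ∈ ℝⁿ with |u₀| = 1 and C₀ > 0 satisfy |D^γΓ(t u₀)| ≥ C₀ t^{−n} for all t > 0. Then there exists t₀ > 0 such that, setting u = t₀ u₀, for every v ∈ ℝⁿ with |v| ≤ 2 and every real r ≠ 0 one has |D^γΓ(r(u + v)) − D^γΓ(r u)| ≤ (1/2)|D^γΓ(r u)|. -/
open MeasureTheory Metric Set
open scoped ENNReal NNReal Classical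

noncomputable section

/-- Axis-parallel closed cube with center `c` and half-side `r`. -/
def cube {n : ℕ} (c : EuclideanSpace ℝ (Fin n)) (r : ℝ) : Set (EuclideanSpace ℝ (Fin n)) :=
  {y | ∀ i, |y i - c i| ≤ r}

/-- A weight: locally integrable and a.e. positive on `ℝⁿ`. -/
def IsWeight {n : ℕ} (w : EuclideanSpace ℝ (Fin n) → ℝ) : Prop :=
  LocallyIntegrable w volume ∧
    ∀ᵐ x ∂(volume : Measure (EuclideanSpace ℝ (Fin n))), 0 < w x

/-- The Muckenhoupt `A_p` condition (over all cubes). -/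
def IsAp {n : ℕ} (p : ℝ) (w : EuclideanSpace ℝ (Fin n) → ℝ) : Prop :=
  ∃ C : ℝ, 0 < C ∧ ∀ (c : EuclideanSpace ℝ (Fin n)) (r : ℝ), 0 < r →
    ((volume (cube c r))⁻¹ * ∫⁻ x in cube c r, ENNReal.ofReal (w x)) *
      ((volume (cube c r))⁻¹ *
          ∫⁻ x in cube c r, ENNReal.ofReal (w x ^ (-(1 / (p - 1))))) ^ (p - 1) ≤
      ENNReal.ofReal C

/-- Distance between two sets. -/
def setDist {n : ℕ} (A B : Set (EuclideanSpace ℝ (Fin n))) : ℝ :=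
  sInf (Set.image2 dist A B)

/-- A β-admissible ball contained in Ω : `diam B < β * dist(B, ∂Ω)`. -/
def IsAdmissibleBall {n : ℕ} (Ω : Set (EuclideanSpace ℝ (Fin n))) (β : ℝ)
    (c : EuclideanSpace ℝ (Fin n)) (r : ℝ) : Prop :=
  0 < r ∧ ball c r ⊆ Ω ∧ Metric.diam (ball c r) < β * setDist (ball c r) (frontier Ω)

/-- The local Muckenhoupt class `A_p^β(Ω)`. -/
def IsApLocBeta {n : ℕ} (Ω : Set (EuclideanSpace ℝ (Fin n))) (β p : ℝ)
    (w : EuclideanSpace ℝ (Fin n) → ℝ) : Prop :=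
  ∃ C : ℝ, 0 < C ∧ ∀ c r, IsAdmissibleBall Ω β c r →
    ((volume (ball c r))⁻¹ * ∫⁻ x in ball c r, ENNReal.ofReal (w x)) *
      ((volume (ball c r))⁻¹ *
          ∫⁻ x in ball c r, ENNReal.ofReal (w x ^ (-(1 / (p - 1))))) ^ (p - 1) ≤
      ENNReal.ofReal C

/-- Hardy–Littlewood maximal function (over cubes containing `x`). -/
def maximalFn {n : ℕ} (f : EuclideanSpace ℝ (Fin n) → ℝ)
    (x : EuclideanSpace ℝ (Fin n)) : ℝ≥0∞ :=
  ⨆ (c : EuclideanSpace ℝ (Fin n)) (r : ℝ) (_ : 0 < r) (_ : x ∈ cube c r),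
    (volume (cube c r))⁻¹ * ∫⁻ y in cube c r, ENNReal.ofReal |f y|

/-- Local sharp maximal function over cubes `x ∈ Q ⊆ Ω`. -/
def sharpMaximalFn {n : ℕ} (Ω : Set (EuclideanSpace ℝ (Fin n)))
    (f : EuclideanSpace ℝ (Fin n) → ℝ) (x : EuclideanSpace ℝ (Fin n)) : ℝ≥0∞ :=
  ⨆ (c : EuclideanSpace ℝ (Fin n)) (r : ℝ) (_ : 0 < r) (_ : x ∈ cube c r)
      (_ : cube c r ⊆ Ω),
    (volume (cube c r))⁻¹ *
      ∫⁻ y in cube c r,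
        ENNReal.ofReal |f y - (volume (cube c r)).toReal⁻¹ * ∫ z in cube c r, f z|

/-- The fundamental solution of `(−Δ)^m` in `ℝⁿ` (up to a nonzero constant factor). -/
def fundGamma (n m : ℕ) (x : EuclideanSpace ℝ (Fin n)) : ℝ :=
  if Odd n ∨ 2 * m < n then ‖x‖ ^ ((2 * m : ℝ) - n)
  else ‖x‖ ^ ((2 * m : ℝ) - n) * Real.log ‖x‖

/-- Partial derivative in the `i`-th coordinate direction. -/
def pderivE {n : ℕ} (i : Fin n) (f : EuclideanSpace ℝ (Fin n) → ℝ)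
    (x : EuclideanSpace ℝ (Fin n)) : ℝ :=
  fderiv ℝ f x (EuclideanSpace.single i 1)

/-- Multi-index derivative `D^γ`. -/
def multiDeriv {n : ℕ} (γ : Fin n → ℕ) (f : EuclideanSpace ℝ (Fin n) → ℝ) :
    EuclideanSpace ℝ (Fin n) → ℝ :=
  (List.finRange n).foldr (fun i g => (pderivE i)^[γ i] g) f

/-!
`D^γΓ` is even and homogeneous of degree `-n`. Indeed, for `t > 0` one has
`Γ(t x) = t^{2m-n} Γ(x) + t^{2m-n} log t · |x|^{2m-n}`, the last term occurring only in the
logarithmic case; there `|x|^{2m-n} = (|x|²)^{m-n/2}` is smooth on all of `ℝⁿ` and homogeneous of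
degree `2m - n < 2m`, so `D^γ` of it is homogeneous of negative degree and continuous at `0`,
hence zero. Therefore
`D^γΓ(r(t₀u₀ + v)) - D^γΓ(r t₀ u₀) = |r t₀|^{-n} (D^γΓ(u₀ + v/t₀) - D^γΓ(u₀))`, and since
`D^γΓ` is continuous at `u₀` with `D^γΓ(u₀) ≠ 0` (the lower bound at `t = 1`), any large `t₀` works.
-/

open Filter Topology
open scoped ContDiff

section HomogeneousOp

variable {E : Type*} [NormedAddCommGroup E] [NormedSpace ℝ E]

/-- The properties of `D^γ` (with `k = |γ|`) on which the homogeneity argument rests. -/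
structure IsHomogeneousOp (U : Set E) (k : ℕ) (T : (E → ℝ) → E → ℝ) : Prop where
  contDiffOn {f : E → ℝ} : ContDiffOn ℝ ∞ f U → ContDiffOn ℝ ∞ (T f) U
  congr {f g : E → ℝ} : EqOn f g U → EqOn (T f) (T g) U
  map_linear {f g : E → ℝ} : ContDiffOn ℝ ∞ f U → ContDiffOn ℝ ∞ g U → ∀ a b : ℝ,
    EqOn (T fun y => a * f y + b * g y) (fun y => a * T f y + b * T g y) U
  map_comp_smul {f : E → ℝ} : ContDiffOn ℝ ∞ f U → ∀ c : ℝ, MapsTo (c • ·) U U →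
    EqOn (T fun y => f (c • y)) (fun y => c ^ k * T f (c • y)) U

variable {U : Set E} {k l : ℕ} {S T : (E → ℝ) → E → ℝ} {f g : E → ℝ} {a : ℝ}

namespace IsHomogeneousOp

theorem map_const_mul (hT : IsHomogeneousOp U k T) (hf : ContDiffOn ℝ ∞ f U)
    (a : ℝ) : EqOn (T fun y => a * f y) (fun y => a * T f y) U := by
  simpa using hT.map_linear hf hf a 0

theorem map_zero (hT : IsHomogeneousOp U k T) : EqOn (T 0) 0 U := by
  simpa only [zero_mul, Pi.zero_def] using hT.map_const_mul (f := 0) contDiffOn_const 0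

theorem id : IsHomogeneousOp U 0 fun f => f where
  contDiffOn hf := hf
  congr h := h
  map_linear _ _ _ _ := fun _ _ => rfl
  map_comp_smul _ _ _ := by simp [EqOn]

theorem comp (hS : IsHomogeneousOp U k S) (hT : IsHomogeneousOp U l T) :
    IsHomogeneousOp U (k + l) (S ∘ T) where
  contDiffOn hf := hS.contDiffOn (hT.contDiffOn hf)
  congr h := hS.congr (hT.congr h)
  map_linear hf hg a b x hx := by
    rw [Function.comp_apply, hS.congr (hT.map_linear hf hg a b) hx,
      hS.map_linear (hT.contDiffOn hf) (hT.contDiffOn hg) a b hx]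
    rfl
  map_comp_smul {f} hf c hc x hx := by
    have hTf := hT.contDiffOn hf
    have hTf_smul : ContDiffOn ℝ ∞ (fun y => T f (c • y)) U :=
      hTf.comp (contDiff_const_smul c).contDiffOn hc
    calc S (T fun y => f (c • y)) x
        = S (fun y => c ^ l * T f (c • y)) x := hS.congr (hT.map_comp_smul hf c hc) hx
      _ = c ^ l * S (fun y => T f (c • y)) x := hS.map_const_mul hTf_smul _ hx
      _ = c ^ l * (c ^ k * S (T f) (c • x)) := by rw [hS.map_comp_smul hTf c hc hx]
      _ = c ^ (k + l) * S (T f) (c • x) := by ring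

theorem iterate (hT : IsHomogeneousOp U k T) (j : ℕ) : IsHomogeneousOp U (k * j) T^[j] := by
  induction j with
  | zero => exact IsHomogeneousOp.id
  | succ j ih => rw [Function.iterate_succ', mul_add_one, add_comm]; exact hT.comp ih


theorem apply_smul_of_smul_eq (hT : IsHomogeneousOp U k T)
    (hU : ∀ t : ℝ, 0 < t → MapsTo (t • ·) U U) (hf : ContDiffOn ℝ ∞ f U)
    (hg : ContDiffOn ℝ ∞ g U) (hTg : EqOn (T g) 0 U) {b : ℝ → ℝ}
    (hfg : ∀ t : ℝ, 0 < t → ∀ y ∈ U, f (t • y) = t ^ a * f y + b t * g y)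
    {t : ℝ} (ht : 0 < t) {x : E} (hx : x ∈ U) : T f (t • x) = t ^ (a - k) * T f x := by
  have hscale : t ^ k * T f (t • x) = t ^ a * T f x :=
    calc t ^ k * T f (t • x)
        = T (fun y => f (t • y)) x := (hT.map_comp_smul hf t (hU t ht) hx).symm
      _ = T (fun y => t ^ a * f y + b t * g y) x := hT.congr (fun y hy => hfg t ht y hy) hx
      _ = t ^ a * T f x := by
        simp only [hT.map_linear hf hg _ _ hx, hTg hx, Pi.zero_apply, mul_zero, add_zero]
  rw [Real.rpow_sub ht, Real.rpow_natCast, div_mul_eq_mul_div, ← hscale]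
  field_simp

theorem apply_smul_of_homogeneous (hT : IsHomogeneousOp U k T)
    (hU : ∀ t : ℝ, 0 < t → MapsTo (t • ·) U U) (hf : ContDiffOn ℝ ∞ f U)
    (hfa : ∀ t : ℝ, 0 < t → ∀ y ∈ U, f (t • y) = t ^ a * f y)
    {t : ℝ} (ht : 0 < t) {x : E} (hx : x ∈ U) : T f (t • x) = t ^ (a - k) * T f x :=
  hT.apply_smul_of_smul_eq hU hf contDiffOn_const hT.map_zero (b := 0)
    (fun t ht y hy => by simp [hfa t ht y hy]) ht hx

theorem eq_zero_of_homogeneous_of_lt (hT : IsHomogeneousOp univ k T) (hf : ContDiff ℝ ∞ f)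
    (hfa : ∀ t : ℝ, 0 < t → ∀ y, f (t • y) = t ^ a * f y) (ha : a < k) : T f = 0 := by
  funext x
  have hpos : 0 < (k : ℝ) - a := sub_pos.2 ha
  have hTf : Continuous (T f) := (contDiffOn_univ.1 (hT.contDiffOn hf.contDiffOn)).continuous
  have hconst : ∀ t : ℝ, 0 < t → t ^ ((k : ℝ) - a) * T f (t • x) = T f x := by
    intro t ht
    rw [hT.apply_smul_of_homogeneous (fun _ _ => mapsTo_univ _ _) hf.contDiffOn
      (fun t ht y _ => hfa t ht y) ht (mem_univ x), ← mul_assoc, ← Real.rpow_add ht]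
    simp
  have hlim : Tendsto (fun t : ℝ => t ^ ((k : ℝ) - a) * T f (t • x)) (𝓝[>] 0)
      (𝓝 ((0 : ℝ) ^ ((k : ℝ) - a) * T f ((0 : ℝ) • x))) :=
    ((Real.continuousAt_rpow_const _ _ (Or.inr hpos.le)).mul
      (hTf.comp (continuous_id.smul continuous_const)).continuousAt).tendsto.mono_left
      nhdsWithin_le_nhds
  rw [Real.zero_rpow hpos.ne', zero_mul] at hlim
  have hev : (fun t : ℝ => t ^ ((k : ℝ) - a) * T f (t • x)) =ᶠ[𝓝[>] 0] fun _ => T f x :=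
    eventually_nhdsWithin_of_forall hconst
  exact tendsto_nhds_unique (tendsto_const_nhds.congr' hev.symm) hlim

theorem apply_neg_of_even (hT : IsHomogeneousOp U k T) (hk : Even k)
    (hU : MapsTo (fun y => -y) U U) (hf : ContDiffOn ℝ ∞ f U) (hf_neg : ∀ y ∈ U, f (-y) = f y)
    {x : E} (hx : x ∈ U) : T f (-x) = T f x := by
  have hscale := hT.map_comp_smul hf (-1) (by simpa using hU) hx
  simp only [neg_one_smul, hk.neg_one_pow, one_mul] at hscale
  rw [← hscale]
  exact hT.congr hf_neg hx

end IsHomogeneousOp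

theorem isHomogeneousOp_fderiv_apply (hU : IsOpen U) (v : E) :
    IsHomogeneousOp U 1 fun f x => fderiv ℝ f x v where
  contDiffOn hf := (hf.fderiv_of_isOpen hU (by simp)).clm_apply contDiffOn_const
  congr h x hx := by
    simp only [(Filter.eventuallyEq_of_mem (hU.mem_nhds hx) h).fderiv_eq]
  map_linear {f g} hf hg a b x hx := by
    have hdiff {h : E → ℝ} (hh : ContDiffOn ℝ ∞ h U) : DifferentiableAt ℝ h x :=
      (hh.contDiffAt (hU.mem_nhds hx)).differentiableAt (by simp)
    simp [fderiv_fun_add ((hdiff hf).const_mul a) ((hdiff hg).const_mul b),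
      fderiv_const_mul (hdiff hf), fderiv_const_mul (hdiff hg)]
  map_comp_smul _ c _ x _ := by simp [fderiv_comp_smul]

end HomogeneousOp

theorem norm_smul_rpow {E : Type*} [SeminormedAddCommGroup E] [NormedSpace ℝ E] {t : ℝ}
    (ht : 0 < t) (y : E) (a : ℝ) : ‖t • y‖ ^ a = t ^ a * ‖y‖ ^ a := by
  rw [norm_smul, Real.norm_of_nonneg ht.le, Real.mul_rpow ht.le (norm_nonneg y)]

section FundGamma

theorem contDiffOn_fundGamma (n m : ℕ) :
    ContDiffOn ℝ ∞ (fundGamma n m) {0}ᶜ := by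
  intro x hx
  have hnorm := contDiffAt_norm ℝ (n := ∞) hx
  have hx' : ‖x‖ ≠ 0 := norm_ne_zero_iff.2 hx
  unfold fundGamma
  split
  · exact (hnorm.rpow_const_of_ne hx').contDiffWithinAt
  · exact ((hnorm.rpow_const_of_ne hx').mul (hnorm.log hx')).contDiffWithinAt

variable {n m : ℕ}

theorem isHomogeneousOp_multiDeriv {U : Set (EuclideanSpace ℝ (Fin n))} (hU : IsOpen U)
    (γ : Fin n → ℕ) : IsHomogeneousOp U (∑ i, γ i) (multiDeriv γ) := by
  have hfold (l : List (Fin n)) : IsHomogeneousOp U (l.map γ).sum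
      fun f => l.foldr (fun i g => (pderivE i)^[γ i] g) f := by
    induction l with
    | nil => exact IsHomogeneousOp.id
    | cons i l ih =>
      rw [List.map_cons, List.sum_cons, ← one_mul (γ i)]
      exact ((isHomogeneousOp_fderiv_apply hU (EuclideanSpace.single i 1)).iterate (γ i)).comp ih
  rw [Fin.sum_univ_def]
  exact hfold (List.finRange n)

theorem fundGamma_neg (x : EuclideanSpace ℝ (Fin n)) : fundGamma n m (-x) = fundGamma n m x := by
  simp only [fundGamma, norm_neg]

theorem contDiff_norm_rpow_of_not_odd_or_lt (h : ¬(Odd n ∨ 2 * m < n)) :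
    ContDiff ℝ ∞ fun x : EuclideanSpace ℝ (Fin n) => ‖x‖ ^ ((2 * m : ℝ) - n) := by
  push Not at h
  obtain ⟨⟨j, rfl⟩, hle⟩ := And.imp_left Nat.not_odd_iff_even.1 h
  have hexp : (2 * m : ℝ) - ↑(j + j) = ((2 * (m - j) : ℕ) : ℝ) := by
    push_cast [Nat.cast_sub (show j ≤ m by omega)]
    ring
  simp_rw [hexp, Real.rpow_natCast, pow_mul]
  exact (contDiff_norm_sq ℝ).pow _

theorem multiDeriv_norm_rpow_eq_zero (hn : n ≠ 0) {γ : Fin n → ℕ} (hγ : ∑ i, γ i = 2 * m)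
    (h : ¬(Odd n ∨ 2 * m < n)) :
    multiDeriv γ (fun x : EuclideanSpace ℝ (Fin n) => ‖x‖ ^ ((2 * m : ℝ) - n)) = 0 :=
  (isHomogeneousOp_multiDeriv isOpen_univ γ).eq_zero_of_homogeneous_of_lt
    (contDiff_norm_rpow_of_not_odd_or_lt h) (fun _ ht y => norm_smul_rpow ht y _)
    (by rw [hγ]; push_cast; linarith [(Nat.cast_pos.2 (Nat.pos_of_ne_zero hn) : (0 : ℝ) < n)])

theorem multiDeriv_fundGamma_smul_of_pos (hn : n ≠ 0) {γ : Fin n → ℕ} (hγ : ∑ i, γ i = 2 * m)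
    {t : ℝ} (ht : 0 < t) {x : EuclideanSpace ℝ (Fin n)} (hx : x ≠ 0) :
    multiDeriv γ (fundGamma n m) (t • x) = t ^ (-(n : ℝ)) * multiDeriv γ (fundGamma n m) x := by
  have hT := isHomogeneousOp_multiDeriv (U := {0}ᶜ) isOpen_compl_singleton γ
  have hU (s : ℝ) (hs : 0 < s) : MapsTo (s • ·) ({0}ᶜ : Set (EuclideanSpace ℝ (Fin n))) {0}ᶜ :=
    fun y hy => smul_ne_zero hs.ne' hy
  have hexp : (2 * m : ℝ) - n - ((∑ i, γ i : ℕ) : ℝ) = -n := by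
    rw [hγ]; push_cast; ring
  rw [← hexp]
  by_cases h : Odd n ∨ 2 * m < n
  · refine hT.apply_smul_of_homogeneous hU (contDiffOn_fundGamma n m) (fun s hs y _ => ?_) ht hx
    simp only [fundGamma, if_pos h, norm_smul_rpow hs]
  · refine hT.apply_smul_of_smul_eq hU (contDiffOn_fundGamma n m)
      (contDiff_norm_rpow_of_not_odd_or_lt h).contDiffOn
      (fun y _ => congrFun (multiDeriv_norm_rpow_eq_zero hn hγ h) y)
      (b := fun s => s ^ ((2 * m : ℝ) - n) * Real.log s) (fun s hs y hy => ?_) ht hx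
    simp only [fundGamma, if_neg h]
    rw [norm_smul_rpow hs, norm_smul, Real.norm_of_nonneg hs.le,
      Real.log_mul hs.ne' (norm_ne_zero_iff.2 hy)]
    ring

theorem multiDeriv_fundGamma_smul (hn : n ≠ 0) {γ : Fin n → ℕ} (hγ : ∑ i, γ i = 2 * m)
    {r : ℝ} (hr : r ≠ 0) {x : EuclideanSpace ℝ (Fin n)} (hx : x ≠ 0) :
    multiDeriv γ (fundGamma n m) (r • x) = |r| ^ (-(n : ℝ)) * multiDeriv γ (fundGamma n m) x := by
  rcases hr.lt_or_gt with hr | hr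
  · have hrx : r • x = -(|r| • x) := by rw [abs_of_neg hr, neg_smul, neg_neg]
    rw [hrx, (isHomogeneousOp_multiDeriv (U := {0}ᶜ) isOpen_compl_singleton γ).apply_neg_of_even
      (by rw [hγ]; exact even_two_mul m) (fun y hy => neg_ne_zero.2 hy)
      (contDiffOn_fundGamma n m) (fun y _ => fundGamma_neg y)
      (smul_ne_zero (abs_ne_zero.2 hr.ne) hx)]
    exact multiDeriv_fundGamma_smul_of_pos hn hγ (abs_pos.2 hr.ne) hx
  · rw [abs_of_pos hr]
    exact multiDeriv_fundGamma_smul_of_pos hn hγ hr hx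

end FundGamma

theorem exists_abs_sub_le_half_of_smul_eq {E : Type*} [NormedAddCommGroup E] [NormedSpace ℝ E]
    {F : E → ℝ} {c : ℝ → ℝ} (hF : ∀ r : ℝ, r ≠ 0 → ∀ x : E, x ≠ 0 → F (r • x) = c r * F x)
    {u : E} (hu : u ≠ 0) (hFu : F u ≠ 0) (hcont : ContinuousAt F u) (R : ℝ) :
    ∃ t₀ : ℝ, 0 < t₀ ∧ ∀ v : E, ‖v‖ ≤ R → ∀ r : ℝ, r ≠ 0 →
      |F (r • (t₀ • u + v)) - F (r • (t₀ • u))| ≤ 1 / 2 * |F (r • (t₀ • u))| := by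
  have hnear : ∀ᶠ y in 𝓝 u, y ≠ 0 ∧ dist (F y) (F u) < |F u| / 2 :=
    (eventually_ne_nhds hu).and (hcont.eventually (ball_mem_nhds _ (by positivity)))
  obtain ⟨ε, hε, hball⟩ := Metric.eventually_nhds_iff.1 hnear
  refine ⟨(|R| + 1) / ε, by positivity, fun v hv r hr => ?_⟩
  set t₀ := (|R| + 1) / ε
  have ht₀ : 0 < t₀ := by positivity
  have hw : dist (u + t₀⁻¹ • v) u < ε := by
    rw [dist_eq_norm, add_sub_cancel_left, norm_smul, Real.norm_of_nonneg (inv_pos.2 ht₀).le,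
      inv_div, div_mul_eq_mul_div, div_lt_iff₀ (by positivity)]
    nlinarith [le_abs_self R, abs_nonneg R]
  obtain ⟨hne, hclose⟩ := hball hw
  have hrt : r * t₀ ≠ 0 := mul_ne_zero hr ht₀.ne'
  have hsplit : r • (t₀ • u + v) = (r * t₀) • (u + t₀⁻¹ • v) := by
    rw [mul_smul, smul_add t₀, smul_inv_smul₀ ht₀.ne', smul_add]
  rw [hsplit, smul_smul, hF _ hrt _ hne, hF _ hrt _ hu, ← mul_sub, abs_mul, abs_mul]
  calc |c (r * t₀)| * |F (u + t₀⁻¹ • v) - F u|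
      ≤ |c (r * t₀)| * (|F u| / 2) := by gcongr; exact (Real.dist_eq _ _ ▸ hclose).le
    _ = 1 / 2 * (|c (r * t₀)| * |F u|) := by ring

theorem multiDeriv_fundGamma_comparable_general {n m : ℕ} (hn : 2 ≤ n)
    (γ : Fin n → ℕ) (hγ : ∑ i, γ i = 2 * m)
    (u₀ : EuclideanSpace ℝ (Fin n)) (hu₀ : ‖u₀‖ = 1) (C₀ : ℝ) (hC₀ : 0 < C₀)
    (hlow : ∀ t : ℝ, 0 < t →
      C₀ * t ^ (-(n : ℝ)) ≤ |multiDeriv γ (fundGamma n m) (t • u₀)|) :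
    ∃ t₀ : ℝ, 0 < t₀ ∧ ∀ v : EuclideanSpace ℝ (Fin n), ‖v‖ ≤ 2 → ∀ r : ℝ, r ≠ 0 →
      |multiDeriv γ (fundGamma n m) (r • (t₀ • u₀ + v)) -
          multiDeriv γ (fundGamma n m) (r • (t₀ • u₀))| ≤
        (1 / 2) * |multiDeriv γ (fundGamma n m) (r • (t₀ • u₀))| := by
  have hu₀_ne : u₀ ≠ 0 := norm_ne_zero_iff.1 (hu₀ ▸ one_ne_zero)
  have hF_u₀ : multiDeriv γ (fundGamma n m) u₀ ≠ 0 := by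
    have h := hlow 1 one_pos
    rw [Real.one_rpow, mul_one, one_smul] at h
    exact abs_pos.1 (hC₀.trans_le h)
  have hcont : ContinuousAt (multiDeriv γ (fundGamma n m)) u₀ :=
    ((isHomogeneousOp_multiDeriv isOpen_compl_singleton γ).contDiffOn
      (contDiffOn_fundGamma n m)).continuousOn.continuousAt
      (isOpen_compl_singleton.mem_nhds hu₀_ne)
  exact exists_abs_sub_le_half_of_smul_eq
    (fun r hr x hx => multiDeriv_fundGamma_smul (by omega) hγ hr hx) hu₀_ne hF_u₀ hcont 2

/-- choice of `t₀` making `D^γΓ` nearly constant on perturbations. -/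
theorem multiDeriv_fundGamma_comparable {n m : ℕ} (hn : 2 ≤ n) (hm : 1 ≤ m)
    (γ : Fin n → ℕ) (hγ : ∑ i, γ i = 2 * m)
    (u₀ : EuclideanSpace ℝ (Fin n)) (hu₀ : ‖u₀‖ = 1) (C₀ : ℝ) (hC₀ : 0 < C₀)
    (hlow : ∀ t : ℝ, 0 < t →
      C₀ * t ^ (-(n : ℝ)) ≤ |multiDeriv γ (fundGamma n m) (t • u₀)|) :
    ∃ t₀ : ℝ, 0 < t₀ ∧ ∀ v : EuclideanSpace ℝ (Fin n), ‖v‖ ≤ 2 → ∀ r : ℝ, r ≠ 0 →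
      |multiDeriv γ (fundGamma n m) (r • (t₀ • u₀ + v)) -
          multiDeriv γ (fundGamma n m) (r • (t₀ • u₀))| ≤
        (1 / 2) * |multiDeriv γ (fundGamma n m) (r • (t₀ • u₀))| :=
  multiDeriv_fundGamma_comparable_general hn γ hγ u₀ hu₀ C₀ hC₀ hlow
end
end

section
/- Let Ω ⊂ ℝⁿ be a bounded domain, 1 < p < ∞, 0 < β < 1, let w be a weight, and let C > 0. Suppose that for every β-admissible ball B ⊂ Ω there exists a ball B' ⊂ Ω of the same radius such that: (i) for every nonnegative measurable f supported in B, ((1/|B|)∫_B f)^p · w(B') ≤ C ∫_B f^p w dx; and (ii) for every nonnegative measurable g supported in B', ((1/|B'|)∫_{B'} g)^p · w(B) ≤ C ∫_{B'} g^p w dx. Then there exists C' > 0 such that for every β-admissible ball B ⊂ Ω and every nonnegative measurable f, ((1/|B|)∫_B f)^p ≤ (C'/w(B)) ∫_B f^p w dx; consequently w ∈ A_p^β(Ω). -/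
/-!
Testing (ii) with `g = 1_{B'}` gives `w(B) ≤ C w(B')`; together with (i) applied to `f 1_B`
this yields `(⨍_B f)^p w(B) ≤ C² ∫_B f^p w` for every `f ≥ 0`. Testing that inequality with
`f = w^{-1/(p-1)}`, for which `f^p w = f`, gives `w(B)/|B| · (⨍_B w^{-1/(p-1)})^{p-1} ≤ C²`;
truncating `f` keeps both sides finite, and monotone convergence removes the truncation.
-/

open MeasureTheory Metric Set
open scoped ENNReal NNReal Classical

noncomputable section

theorem ENNReal.le_rpow_one_div_of_rpow_le_mul {a K : ℝ≥0∞} {p : ℝ} (hp : 1 < p) (ha : a ≠ ∞)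
    (h : a ^ p ≤ K * a) : a ≤ K ^ (1 / (p - 1)) := by
  rcases eq_or_ne a 0 with rfl | ha0
  · exact zero_le
  have hp1 : 0 < p - 1 := by linarith
  have hsplit : a ^ p = a ^ (p - 1) * a := by
    simpa only [sub_add_cancel, ENNReal.rpow_one] using ENNReal.rpow_add (p - 1) 1 ha0 ha
  have hle : a ^ (p - 1) ≤ K := (ENNReal.mul_le_mul_iff_left ha0 ha).mp (hsplit ▸ h)
  calc a = (a ^ (p - 1)) ^ (1 / (p - 1)) := by
        rw [← ENNReal.rpow_mul, mul_one_div_cancel hp1.ne', ENNReal.rpow_one]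
    _ ≤ K ^ (1 / (p - 1)) := ENNReal.rpow_le_rpow hle (by positivity)

theorem Real.rpow_mul_le_self_of_le_rpow_neg {t w p : ℝ} (hp : 1 < p) (ht : 0 ≤ t) (hw : 0 < w)
    (htw : t ≤ w ^ (-(1 / (p - 1)))) : t ^ p * w ≤ t := by
  have hp1 : 0 < p - 1 := by linarith
  have hpow : t ^ (p - 1) ≤ w⁻¹ := by
    calc t ^ (p - 1) ≤ (w ^ (-(1 / (p - 1)))) ^ (p - 1) := Real.rpow_le_rpow ht htw hp1.le
      _ = w⁻¹ := by
        rw [← Real.rpow_mul hw.le, neg_mul, one_div_mul_cancel hp1.ne', Real.rpow_neg_one]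
  calc t ^ p * w = t ^ (p - 1) * t ^ (1 : ℝ) * w := by
        rw [← Real.rpow_add' ht (by linarith), sub_add_cancel]
    _ = t ^ (p - 1) * w * t := by rw [Real.rpow_one]; ring
    _ ≤ w⁻¹ * w * t := by gcongr
    _ = t := by rw [inv_mul_cancel₀ hw.ne', one_mul]

theorem MeasureTheory.LocallyIntegrable.setLIntegral_ofReal_ne_top {X : Type*}
    [PseudoMetricSpace X] [ProperSpace X] [MeasurableSpace X] {μ : Measure X} {w : X → ℝ}
    (hw : LocallyIntegrable w μ) {s : Set X} (hs : Bornology.IsBounded s) :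
    ∫⁻ x in s, ENNReal.ofReal (w x) ∂μ ≠ ∞ :=
  ((hw.integrableOn_isCompact hs.isCompact_closure).mono_set subset_closure).lintegral_lt_top.ne

section WeightedAverage

variable {α : Type*} [MeasurableSpace α] {μ : Measure α} {s s' : Set α} {w : α → ℝ} {p : ℝ}
  {C K : ℝ≥0∞}

def WeightedAverageInequality (μ : Measure α) (w : α → ℝ) (p : ℝ) (K : ℝ≥0∞) (s : Set α) :
    Prop :=
  ∀ f : α → ℝ, Measurable f → (∀ x, 0 ≤ f x) →
    ((μ s)⁻¹ * ∫⁻ x in s, ENNReal.ofReal (f x) ∂μ) ^ p ≤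
      (K / ∫⁻ x in s, ENNReal.ofReal (w x) ∂μ) *
        ∫⁻ x in s, ENNReal.ofReal (f x) ^ p * ENNReal.ofReal (w x) ∂μ

theorem setLIntegral_indicator_self_comp (hs : MeasurableSet s) (f : α → ℝ)
    (F : α → ℝ → ℝ≥0∞) :
    ∫⁻ x in s, F x (s.indicator f x) ∂μ = ∫⁻ x in s, F x (f x) ∂μ :=
  setLIntegral_congr_fun hs fun x hx => by rw [indicator_of_mem hx]

theorem setLIntegral_ofReal_ne_zero (hw : AEMeasurable w (μ.restrict s))
    (hpos : ∀ᵐ x ∂μ.restrict s, 0 < w x) (hs : μ s ≠ 0) :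
    ∫⁻ x in s, ENNReal.ofReal (w x) ∂μ ≠ 0 := by
  rw [Ne, lintegral_eq_zero_iff' hw.ennreal_ofReal]
  intro hzero
  have hfalse : ∀ᵐ _x ∂μ.restrict s, False := by
    filter_upwards [hzero, hpos] with x hx hxpos
    exact (ENNReal.ofReal_pos.mpr hxpos).ne' hx
  rw [Filter.eventually_false_iff_eq_bot, ae_eq_bot, Measure.restrict_eq_zero] at hfalse
  exact hs hfalse

theorem setLIntegral_ofReal_le_of_forall_supported (hs' : MeasurableSet s') (h0 : μ s' ≠ 0)
    (htop : μ s' ≠ ∞)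
    (h : ∀ g : α → ℝ, Measurable g → (∀ x, 0 ≤ g x) → (∀ x, x ∉ s' → g x = 0) →
      ((μ s')⁻¹ * ∫⁻ x in s', ENNReal.ofReal (g x) ∂μ) ^ p *
          ∫⁻ x in s, ENNReal.ofReal (w x) ∂μ ≤
        C * ∫⁻ x in s', ENNReal.ofReal (g x) ^ p * ENNReal.ofReal (w x) ∂μ) :
    ∫⁻ x in s, ENNReal.ofReal (w x) ∂μ ≤ C * ∫⁻ x in s', ENNReal.ofReal (w x) ∂μ := by
  have htest := h (s'.indicator 1) (measurable_one.indicator hs')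
    (fun x => indicator_nonneg (fun _ _ => zero_le_one) x) (fun x hx => indicator_of_notMem hx _)
  have hmass : ∫⁻ x in s', ENNReal.ofReal (s'.indicator 1 x) ∂μ = μ s' := by
    rw [setLIntegral_indicator_self_comp hs' 1 fun _ y => ENNReal.ofReal y]
    simp
  have hweight : ∫⁻ x in s', ENNReal.ofReal (s'.indicator 1 x) ^ p * ENNReal.ofReal (w x) ∂μ =
      ∫⁻ x in s', ENNReal.ofReal (w x) ∂μ := by
    rw [setLIntegral_indicator_self_comp hs' 1
      fun x y => ENNReal.ofReal y ^ p * ENNReal.ofReal (w x)]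
    simp
  rwa [hmass, hweight, ENNReal.inv_mul_cancel h0 htop, ENNReal.one_rpow, one_mul] at htest

theorem WeightedAverageInequality.of_forall_supported (hs : MeasurableSet s)
    (hW0 : ∫⁻ x in s, ENNReal.ofReal (w x) ∂μ ≠ 0)
    (hWtop : ∫⁻ x in s, ENNReal.ofReal (w x) ∂μ ≠ ∞)
    (hcomp : ∫⁻ x in s, ENNReal.ofReal (w x) ∂μ ≤ C * ∫⁻ x in s', ENNReal.ofReal (w x) ∂μ)
    (h : ∀ f : α → ℝ, Measurable f → (∀ x, 0 ≤ f x) → (∀ x, x ∉ s → f x = 0) →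
      ((μ s)⁻¹ * ∫⁻ x in s, ENNReal.ofReal (f x) ∂μ) ^ p *
          ∫⁻ x in s', ENNReal.ofReal (w x) ∂μ ≤
        C * ∫⁻ x in s, ENNReal.ofReal (f x) ^ p * ENNReal.ofReal (w x) ∂μ) :
    WeightedAverageInequality μ w p (C * C) s := by
  intro f hf hf0
  have htest := h (s.indicator f) (hf.indicator hs)
    (fun x => indicator_nonneg (fun a _ => hf0 a) x) (fun x hx => indicator_of_notMem hx f)
  rw [setLIntegral_indicator_self_comp hs f fun _ y => ENNReal.ofReal y,
    setLIntegral_indicator_self_comp hs f fun x y => ENNReal.ofReal y ^ p * ENNReal.ofReal (w x)]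
    at htest
  rw [ENNReal.mul_comm_div, ← mul_div_assoc, ENNReal.le_div_iff_mul_le (.inl hW0) (.inl hWtop)]
  calc _ ≤ ((μ s)⁻¹ * ∫⁻ x in s, ENNReal.ofReal (f x) ∂μ) ^ p *
        (C * ∫⁻ x in s', ENNReal.ofReal (w x) ∂μ) := by gcongr
    _ = C * (((μ s)⁻¹ * ∫⁻ x in s, ENNReal.ofReal (f x) ∂μ) ^ p *
        ∫⁻ x in s', ENNReal.ofReal (w x) ∂μ) := by ring
    _ ≤ C * C * ∫⁻ x in s, ENNReal.ofReal (f x) ^ p * ENNReal.ofReal (w x) ∂μ := by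
      rw [mul_assoc]; gcongr

theorem iSup_lintegral_ofReal_min_natCast {f : α → ℝ} (hf : Measurable f) :
    ⨆ k : ℕ, ∫⁻ x, ENNReal.ofReal (min (f x) k) ∂μ = ∫⁻ x, ENNReal.ofReal (f x) ∂μ := by
  rw [← lintegral_iSup (fun k => (hf.min measurable_const).ennreal_ofReal)
    fun k l hkl x => ENNReal.ofReal_le_ofReal (min_le_min_left _ (Nat.cast_le.mpr hkl))]
  congr 1 with x
  simp only [ENNReal.ofReal_min, ENNReal.ofReal_natCast, ← inf_iSup_eq, ENNReal.iSup_natCast]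
  exact inf_top_eq _

/-- For `f = min (w ^ (-1/(p-1))) k` one has `f^p w ≤ f`, so the inequality reads
`A^p ≤ (K μ(s) / w(s)) A` for the finite average `A` of `f`. -/
theorem WeightedAverageInequality.average_rpow_neg_le (h : WeightedAverageInequality μ w p K s)
    (hp : 1 < p) (hw : AEMeasurable w (μ.restrict s)) (hpos : ∀ᵐ x ∂μ.restrict s, 0 < w x)
    (hs0 : μ s ≠ 0) (hs : μ s ≠ ∞) :
    (μ s)⁻¹ * ∫⁻ x in s, ENNReal.ofReal (w x ^ (-(1 / (p - 1)))) ∂μ ≤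
      (K / (∫⁻ x in s, ENNReal.ofReal (w x) ∂μ) * μ s) ^ (1 / (p - 1)) := by
  set σ := -(1 / (p - 1))
  set g : α → ℝ := fun x => max (hw.mk w x) 0 ^ σ
  have hg : Measurable g := (hw.measurable_mk.max measurable_const).pow_const σ
  have hgw : ∀ᵐ x ∂μ.restrict s, g x = w x ^ σ ∧ 0 < w x := by
    filter_upwards [hw.ae_eq_mk, hpos] with x hx hxpos
    simp only [g, ← hx, max_eq_left hxpos.le, hxpos, and_self]
  have htrunc (k : ℕ) : (μ s)⁻¹ * ∫⁻ x in s, ENNReal.ofReal (min (g x) k) ∂μ ≤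
      (K / (∫⁻ x in s, ENNReal.ofReal (w x) ∂μ) * μ s) ^ (1 / (p - 1)) := by
    have hbound : ∫⁻ x in s, ENNReal.ofReal (min (g x) k) ∂μ ≤ k * μ s := by
      calc _ ≤ ∫⁻ _ in s, (k : ℝ≥0∞) ∂μ := lintegral_mono fun x => by
            simpa only [ENNReal.ofReal_natCast] using
              ENNReal.ofReal_le_ofReal (min_le_right (g x) k)
        _ = k * μ s := setLIntegral_const s k
    have hpoint : ∀ᵐ x ∂μ.restrict s,
        ENNReal.ofReal (min (g x) k) ^ p * ENNReal.ofReal (w x) ≤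
          ENNReal.ofReal (min (g x) k) := by
      filter_upwards [hgw] with x ⟨hgx, hwx⟩
      have ht : 0 ≤ min (g x) k := le_min (Real.rpow_nonneg (le_max_right _ _) σ) k.cast_nonneg
      rw [ENNReal.ofReal_rpow_of_nonneg ht (by linarith), ← ENNReal.ofReal_mul (by positivity)]
      exact ENNReal.ofReal_le_ofReal <|
        Real.rpow_mul_le_self_of_le_rpow_neg hp ht hwx (hgx ▸ min_le_left _ _)
    refine ENNReal.le_rpow_one_div_of_rpow_le_mul hp ?_ ?_
    · exact ENNReal.mul_ne_top (ENNReal.inv_ne_top.mpr hs0)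
        (ne_top_of_le_ne_top (ENNReal.mul_ne_top (ENNReal.natCast_ne_top k) hs) hbound)
    calc _ ≤ (K / ∫⁻ x in s, ENNReal.ofReal (w x) ∂μ) *
          ∫⁻ x in s, ENNReal.ofReal (min (g x) k) ^ p * ENNReal.ofReal (w x) ∂μ :=
          h _ (hg.min measurable_const) fun x =>
            le_min (Real.rpow_nonneg (le_max_right _ _) σ) k.cast_nonneg
      _ ≤ (K / ∫⁻ x in s, ENNReal.ofReal (w x) ∂μ) *
          ∫⁻ x in s, ENNReal.ofReal (min (g x) k) ∂μ :=
          mul_right_mono (lintegral_mono_ae hpoint)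
      _ = _ := by rw [mul_assoc, ← mul_assoc (μ s), ENNReal.mul_inv_cancel hs0 hs, one_mul]
  calc _ = (μ s)⁻¹ * ⨆ k : ℕ, ∫⁻ x in s, ENNReal.ofReal (min (g x) k) ∂μ := by
        rw [iSup_lintegral_ofReal_min_natCast hg]
        exact congrArg _ (lintegral_congr_ae (hgw.mono fun x hx => by simp only [hx.1]))
    _ ≤ _ := by rw [ENNReal.mul_iSup]; exact iSup_le htrunc

theorem WeightedAverageInequality.muckenhoupt_le (h : WeightedAverageInequality μ w p K s)
    (hp : 1 < p) (hw : AEMeasurable w (μ.restrict s)) (hpos : ∀ᵐ x ∂μ.restrict s, 0 < w x)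
    (hs0 : μ s ≠ 0) (hs : μ s ≠ ∞) (hW0 : ∫⁻ x in s, ENNReal.ofReal (w x) ∂μ ≠ 0)
    (hWtop : ∫⁻ x in s, ENNReal.ofReal (w x) ∂μ ≠ ∞) :
    ((μ s)⁻¹ * ∫⁻ x in s, ENNReal.ofReal (w x) ∂μ) *
      ((μ s)⁻¹ * ∫⁻ x in s, ENNReal.ofReal (w x ^ (-(1 / (p - 1)))) ∂μ) ^ (p - 1) ≤ K := by
  have hp1 : 0 < p - 1 := by linarith
  set W := ∫⁻ x in s, ENNReal.ofReal (w x) ∂μ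
  calc _ ≤ ((μ s)⁻¹ * W) * ((K / W * μ s) ^ (1 / (p - 1))) ^ (p - 1) := by
        gcongr; exact h.average_rpow_neg_le hp hw hpos hs0 hs
    _ = K * ((μ s)⁻¹ * μ s) * (W⁻¹ * W) := by
        rw [← ENNReal.rpow_mul, one_div_mul_cancel hp1.ne', ENNReal.rpow_one, div_eq_mul_inv]
        ring
    _ = K := by
        rw [ENNReal.inv_mul_cancel hs0 hs, ENNReal.inv_mul_cancel hW0 hWtop, mul_one, mul_one]

end WeightedAverage

theorem apLocBeta_of_ball_pair_bounds_general {n : ℕ} (Ω : Set (EuclideanSpace ℝ (Fin n)))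
    (p β C : ℝ) (hp : 1 < p) (hC : 0 < C)
    (w : EuclideanSpace ℝ (Fin n) → ℝ) (hw : IsWeight w)
    (H : ∀ c r, IsAdmissibleBall Ω β c r →
      ∃ c' : EuclideanSpace ℝ (Fin n), ball c' r ⊆ Ω ∧
        (∀ f : EuclideanSpace ℝ (Fin n) → ℝ, Measurable f → (∀ x, 0 ≤ f x) →
          (∀ x, x ∉ ball c r → f x = 0) →
          ((volume (ball c r))⁻¹ * ∫⁻ x in ball c r, ENNReal.ofReal (f x)) ^ p *
              (∫⁻ x in ball c' r, ENNReal.ofReal (w x)) ≤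
            ENNReal.ofReal C *
              ∫⁻ x in ball c r, ENNReal.ofReal (f x) ^ p * ENNReal.ofReal (w x)) ∧
        (∀ g : EuclideanSpace ℝ (Fin n) → ℝ, Measurable g → (∀ x, 0 ≤ g x) →
          (∀ x, x ∉ ball c' r → g x = 0) →
          ((volume (ball c' r))⁻¹ * ∫⁻ x in ball c' r, ENNReal.ofReal (g x)) ^ p *
              (∫⁻ x in ball c r, ENNReal.ofReal (w x)) ≤
            ENNReal.ofReal C *
              ∫⁻ x in ball c' r, ENNReal.ofReal (g x) ^ p * ENNReal.ofReal (w x))) :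
    (∃ C' : ℝ, 0 < C' ∧ ∀ c r, IsAdmissibleBall Ω β c r →
      ∀ f : EuclideanSpace ℝ (Fin n) → ℝ, Measurable f → (∀ x, 0 ≤ f x) →
        ((volume (ball c r))⁻¹ * ∫⁻ x in ball c r, ENNReal.ofReal (f x)) ^ p ≤
          (ENNReal.ofReal C' / ∫⁻ x in ball c r, ENNReal.ofReal (w x)) *
            ∫⁻ x in ball c r, ENNReal.ofReal (f x) ^ p * ENNReal.ofReal (w x)) ∧
    IsApLocBeta Ω β p w := by
  have hW0 (c : EuclideanSpace ℝ (Fin n)) {r : ℝ} (hr : 0 < r) :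
      ∫⁻ x in ball c r, ENNReal.ofReal (w x) ≠ 0 :=
    setLIntegral_ofReal_ne_zero hw.1.aestronglyMeasurable.aemeasurable.restrict
      (ae_restrict_of_ae hw.2)
      (measure_ball_pos volume c hr).ne'
  have hWtop (c : EuclideanSpace ℝ (Fin n)) (r : ℝ) :
      ∫⁻ x in ball c r, ENNReal.ofReal (w x) ≠ ∞ :=
    hw.1.setLIntegral_ofReal_ne_top isBounded_ball
  have hball : ∀ c r, IsAdmissibleBall Ω β c r →
      WeightedAverageInequality volume w p (ENNReal.ofReal (C * C)) (ball c r) := by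
    intro c r hB
    obtain ⟨c', -, hsupp, hsupp'⟩ := H c r hB
    rw [ENNReal.ofReal_mul hC.le]
    exact .of_forall_supported measurableSet_ball (hW0 c hB.1) (hWtop c r)
      (setLIntegral_ofReal_le_of_forall_supported measurableSet_ball
        (measure_ball_pos volume c' hB.1).ne' measure_ball_lt_top.ne hsupp') hsupp
  refine ⟨⟨C * C, by positivity, hball⟩, C * C, by positivity, fun c r hB => ?_⟩
  exact (hball c r hB).muckenhoupt_le hp hw.1.aestronglyMeasurable.aemeasurable.restrict
    (ae_restrict_of_ae hw.2) (measure_ball_pos volume c hB.1).ne' measure_ball_lt_top.ne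
    (hW0 c hB.1) (hWtop c r)

/-- from the pair-of-balls averaging inequalities to `A_p^β(Ω)`. -/
theorem apLocBeta_of_ball_pair_bounds {n : ℕ} (Ω : Set (EuclideanSpace ℝ (Fin n)))
    (hΩo : IsOpen Ω) (hΩc : IsConnected Ω) (hΩb : Bornology.IsBounded Ω)
    (p β C : ℝ) (hp : 1 < p) (hβ0 : 0 < β) (hβ1 : β < 1) (hC : 0 < C)
    (w : EuclideanSpace ℝ (Fin n) → ℝ) (hw : IsWeight w)
    (H : ∀ c r, IsAdmissibleBall Ω β c r →
      ∃ c' : EuclideanSpace ℝ (Fin n), ball c' r ⊆ Ω ∧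
        (∀ f : EuclideanSpace ℝ (Fin n) → ℝ, Measurable f → (∀ x, 0 ≤ f x) →
          (∀ x, x ∉ ball c r → f x = 0) →
          ((volume (ball c r))⁻¹ * ∫⁻ x in ball c r, ENNReal.ofReal (f x)) ^ p *
              (∫⁻ x in ball c' r, ENNReal.ofReal (w x)) ≤
            ENNReal.ofReal C *
              ∫⁻ x in ball c r, ENNReal.ofReal (f x) ^ p * ENNReal.ofReal (w x)) ∧
        (∀ g : EuclideanSpace ℝ (Fin n) → ℝ, Measurable g → (∀ x, 0 ≤ g x) →
          (∀ x, x ∉ ball c' r → g x = 0) →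
          ((volume (ball c' r))⁻¹ * ∫⁻ x in ball c' r, ENNReal.ofReal (g x)) ^ p *
              (∫⁻ x in ball c r, ENNReal.ofReal (w x)) ≤
            ENNReal.ofReal C *
              ∫⁻ x in ball c' r, ENNReal.ofReal (g x) ^ p * ENNReal.ofReal (w x))) :
    (∃ C' : ℝ, 0 < C' ∧ ∀ c r, IsAdmissibleBall Ω β c r →
      ∀ f : EuclideanSpace ℝ (Fin n) → ℝ, Measurable f → (∀ x, 0 ≤ f x) →
        ((volume (ball c r))⁻¹ * ∫⁻ x in ball c r, ENNReal.ofReal (f x)) ^ p ≤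
          (ENNReal.ofReal C' / ∫⁻ x in ball c r, ENNReal.ofReal (w x)) *
            ∫⁻ x in ball c r, ENNReal.ofReal (f x) ^ p * ENNReal.ofReal (w x)) ∧
    IsApLocBeta Ω β p w :=
  apLocBeta_of_ball_pair_bounds_general Ω p β C hp hC w hw H
end
end
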